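/- arXiv:1908.10429 — 4 statements merged into one kernel-verified Lean document; each statement's English description precedes it below -/
import Mathlib

section
/- Let Γ be a group and Δ a normal subgroup of finite index. Let k be an algebraically closed field of characteristic zero, V a nonzero finite-dimensional k-vector space, and r₁, r₂ : Γ →* GL(V) group homomorphisms. Let χ : Δ →* kˣ be a character such that r₁(h) = χ(h) • r₂(h) for all h ∈ Δ. Assume that for every finite-index subgroup Δ' of Γ, the restriction of r₁ to Δ' is irreducible. Then there exists a character χ' : Γ →* kˣ with χ'(h) = χ(h) for all h ∈ Δ and r₁(g) = χ'(g) • r₂(g) for all g ∈ Γ. -/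
/-!
Fix `g ∈ Γ` and let `n = dim V`. On `Δ` we have `χ ^ n = det r₁ / det r₂`, the restriction of a
character of `Γ`, hence invariant under conjugation; so `h ↦ χ (g h g⁻¹) / χ h` takes values in the
`n`-th roots of unity and its kernel has finite index. On that kernel `r₂ g⁻¹ r₁ g` commutes with
`r₁`, so by Schur's lemma it is a scalar `χ' g`. Since a unit determines the scalar multiplying
it, `g ↦ χ' g` is multiplicative and agrees with `χ` on `Δ`.
-/

open Module

theorem Module.End.exists_eq_algebraMap_of_forall_commute {k V ι : Type*} [Field k]
    [IsAlgClosed k] [AddCommGroup V] [Module k V] [FiniteDimensional k V] [Nontrivial V]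
    (T : ι → End k V) (hT : ∀ W : Submodule k V, (∀ i, ∀ v ∈ W, T i v ∈ W) → W = ⊥ ∨ W = ⊤)
    (S : End k V) (hS : ∀ i, Commute S (T i)) : ∃ c : k, S = algebraMap k (End k V) c := by
  obtain ⟨c, hc⟩ := S.exists_eigenvalue
  have hinv : ∀ i, ∀ v ∈ S.eigenspace c, T i v ∈ S.eigenspace c := fun i _ hv =>
    mapsTo_genEigenspace_of_comm (hS i) c 1 hv
  have htop : S.eigenspace c = ⊤ := (hT _ hinv).resolve_left (hasEigenvalue_iff.mp hc)
  refine ⟨c, LinearMap.ext fun v => ?_⟩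
  have hv : v ∈ S.eigenspace c := htop ▸ Submodule.mem_top
  rw [mem_eigenspace_iff.mp hv, Module.algebraMap_end_apply]

theorem MonoidHom.finiteIndex_ker_of_forall_pow_eq_one {R H : Type*} [CommRing R] [IsDomain R]
    [Group H] (ψ : H →* Rˣ) {n : ℕ} (hn : n ≠ 0) (hψ : ∀ h, ψ h ^ n = 1) : ψ.ker.FiniteIndex := by
  have : NeZero n := ⟨hn⟩
  have hle : ψ.range ≤ rootsOfUnity n R := by
    rintro _ ⟨h, rfl⟩
    exact hψ h
  have : Finite ψ.range := Finite.of_injective _ (Subgroup.inclusion_injective hle)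
  exact Subgroup.finiteIndex_ker ψ

theorem exists_character_of_forall_exists_smul {k A G : Type*} [Field k] [Ring A] [Algebra k A]
    [Nontrivial A] [Group G] (r₁ r₂ : G →* Aˣ) (h : ∀ g, ∃ c : k, (r₁ g : A) = c • (r₂ g : A)) :
    ∃ χ : G →* kˣ, ∀ g, (r₁ g : A) = (χ g : k) • (r₂ g : A) := by
  choose c hc using h
  have cancel : ∀ g, Function.Injective fun a : k => a • (r₂ g : A) :=
    fun g => smul_left_injective k (r₂ g).ne_zero
  have map_one : c 1 = 1 := cancel 1 <| by simpa using (hc 1).symm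
  have map_mul : ∀ a b, c (a * b) = c a * c b := fun a b => cancel (a * b) <|
    show c (a * b) • _ = (c a * c b) • _ by
      rw [← hc, map_mul, map_mul, Units.val_mul, Units.val_mul, hc a, hc b, smul_mul_smul_comm]
  exact ⟨(MonoidHom.mk ⟨c, map_one⟩ map_mul).toHomUnits, hc⟩

def MonoidHom.conjDiv {Γ M : Type*} [Group Γ] [CommGroup M] {Δ : Subgroup Γ} [Δ.Normal]
    (χ : Δ →* M) (g : Γ) : Δ →* M :=
  χ.comp (MulAut.conjNormal g).toMonoidHom / χ

theorem MonoidHom.mem_ker_conjDiv {Γ M : Type*} [Group Γ] [CommGroup M] {Δ : Subgroup Γ}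
    [Δ.Normal] {χ : Δ →* M} {g : Γ} {h : Δ} :
    h ∈ (χ.conjDiv g).ker ↔ χ (MulAut.conjNormal g h) = χ h := by
  simp [MonoidHom.conjDiv, div_eq_one]

section Twist

variable {k V Γ : Type*} [Field k] [AddCommGroup V] [Module k V] [Group Γ] {Δ : Subgroup Γ}
  [Δ.Normal] {r₁ r₂ : Γ →* (End k V)ˣ} {χ : Δ →* kˣ}

theorem conjDiv_pow_finrank_eq_one
    (hχ : ∀ h : Δ, (r₁ (h : Γ) : End k V) = (χ h : k) • (r₂ (h : Γ) : End k V)) (g : Γ) (h : Δ) :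
    χ.conjDiv g h ^ finrank k V = 1 := by
  let det (r : Γ →* (End k V)ˣ) : Γ →* k := LinearMap.det.comp ((Units.coeHom _).comp r)
  have det_conj (r : Γ →* (End k V)ˣ) : det r (g * h * g⁻¹) = det r h :=
    (isConj_iff_eq.mp ((det r).map_isConj (isConj_iff.mpr ⟨g, rfl⟩))).symm
  have det_twist (x : Δ) : (χ x : k) ^ finrank k V * det r₂ x = det r₁ x := by
    simp only [det, MonoidHom.comp_apply, Units.coeHom_apply, hχ, LinearMap.det_smul]
  have hdet : det r₂ h ≠ 0 := ((r₂ h).isUnit.map LinearMap.det).ne_zero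
  have key : (χ (MulAut.conjNormal g h) : k) ^ finrank k V = (χ h : k) ^ finrank k V :=
    mul_right_cancel₀ hdet <| by
      rw [det_twist, ← det_conj, ← det_conj r₁, ← MulAut.conjNormal_apply, det_twist]
  simp only [MonoidHom.conjDiv, MonoidHom.div_apply, div_pow, div_eq_one]
  exact Units.ext (by push_cast; exact key)

theorem commute_of_mem_ker_conjDiv
    (hχ : ∀ h : Δ, (r₁ (h : Γ) : End k V) = (χ h : k) • (r₂ (h : Γ) : End k V)) {g : Γ} {h : Δ}
    (hh : h ∈ (χ.conjDiv g).ker) : Commute ((r₂ g)⁻¹ * r₁ g) (r₁ h) := by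
  have hconj : r₁ g * r₁ h * (r₁ g)⁻¹ = r₂ g * r₁ h * (r₂ g)⁻¹ := Units.ext <| by
    have hc := hχ (MulAut.conjNormal g h)
    rw [MonoidHom.mem_ker_conjDiv.mp hh, MulAut.conjNormal_apply, map_mul, map_mul, map_inv,
      map_mul, map_mul, map_inv] at hc
    rw [hc, Units.val_mul, Units.val_mul, Units.val_mul, Units.val_mul, hχ h, mul_smul_comm,
      smul_mul_assoc]
  calc (r₂ g)⁻¹ * r₁ g * r₁ h = (r₂ g)⁻¹ * (r₁ g * r₁ h * (r₁ g)⁻¹) * r₁ g := by group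
    _ = r₁ h * ((r₂ g)⁻¹ * r₁ g) := by rw [hconj]; group

theorem exists_smul_eq_of_forall_irreducible [IsAlgClosed k] [FiniteDimensional k V]
    [Nontrivial V] [Δ.FiniteIndex]
    (hχ : ∀ h : Δ, (r₁ (h : Γ) : End k V) = (χ h : k) • (r₂ (h : Γ) : End k V))
    (hirr : ∀ Δ' : Subgroup Γ, Δ'.FiniteIndex →
      ∀ W : Submodule k V, (∀ g ∈ Δ', ∀ v ∈ W, (r₁ g : End k V) v ∈ W) → W = ⊥ ∨ W = ⊤)
    (g : Γ) : ∃ c : k, (r₁ g : End k V) = c • (r₂ g : End k V) := by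
  have : (χ.conjDiv g).ker.FiniteIndex := (χ.conjDiv g).finiteIndex_ker_of_forall_pow_eq_one
    finrank_pos.ne' (conjDiv_pow_finrank_eq_one hχ g)
  let K := (χ.conjDiv g).ker.map Δ.subtype
  have hK : K.FiniteIndex := ⟨by
    rw [Subgroup.index_map_subtype]
    exact mul_ne_zero Subgroup.FiniteIndex.index_ne_zero Subgroup.FiniteIndex.index_ne_zero⟩
  obtain ⟨c, hc⟩ := Module.End.exists_eq_algebraMap_of_forall_commute
    (fun x : K => (r₁ x : End k V)) (fun W hW => hirr K hK W fun x hx => hW ⟨x, hx⟩)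
    (((r₂ g)⁻¹ * r₁ g : (End k V)ˣ) : End k V) (by
      rintro ⟨_, h, hh, rfl⟩
      exact (commute_of_mem_ker_conjDiv hχ hh).map (Units.coeHom _))
  refine ⟨c, ?_⟩
  calc (r₁ g : End k V) = r₂ g * (((r₂ g)⁻¹ * r₁ g : (End k V)ˣ) : End k V) := by
        rw [Units.val_mul, Units.mul_inv_cancel_left]
    _ = c • (r₂ g : End k V) := by rw [hc, ← Algebra.commutes, Algebra.smul_def]

end Twist

theorem twist_extends_general
    {k : Type*} [Field k] [IsAlgClosed k]
    {V : Type*} [AddCommGroup V] [Module k V] [FiniteDimensional k V] [Nontrivial V]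
    {Γ : Type*} [Group Γ] (Δ : Subgroup Γ) [Δ.Normal] [Δ.FiniteIndex]
    (r₁ r₂ : Γ →* (Module.End k V)ˣ) (χ : Δ →* kˣ)
    (hχ : ∀ h : Δ, (r₁ (h : Γ) : Module.End k V) = (χ h : k) • (r₂ (h : Γ) : Module.End k V))
    (hirr : ∀ Δ' : Subgroup Γ, Δ'.FiniteIndex →
      ∀ W : Submodule k V,
        (∀ g ∈ Δ', ∀ v ∈ W, (r₁ g : Module.End k V) v ∈ W) → W = ⊥ ∨ W = ⊤) :
    ∃ χ' : Γ →* kˣ, (∀ h : Δ, χ' (h : Γ) = χ h) ∧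
      ∀ g : Γ, (r₁ g : Module.End k V) = (χ' g : k) • (r₂ g : Module.End k V) := by
  obtain ⟨χ', hχ'⟩ := exists_character_of_forall_exists_smul r₁ r₂
    (exists_smul_eq_of_forall_irreducible hχ hirr)
  refine ⟨χ', fun h => Units.ext ?_, hχ'⟩
  exact smul_left_injective k (r₂ (h : Γ)).ne_zero ((hχ' h).symm.trans (hχ h))

/-- Lemma 5.3 (lem_twists): if `r₁` and `r₂` agree up to a character twist `χ` on a
finite-index normal subgroup `Δ`, and `r₁` is irreducible on every finite-index
subgroup, then `χ` extends to a character `χ'` of `Γ` with `r₁ = r₂ ⊗ χ'`. -/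
theorem twist_extends
    {k : Type*} [Field k] [IsAlgClosed k] [CharZero k]
    {V : Type*} [AddCommGroup V] [Module k V] [FiniteDimensional k V] [Nontrivial V]
    {Γ : Type*} [Group Γ] (Δ : Subgroup Γ) [Δ.Normal] [Δ.FiniteIndex]
    (r₁ r₂ : Γ →* (Module.End k V)ˣ) (χ : Δ →* kˣ)
    (hχ : ∀ h : Δ, (r₁ (h : Γ) : Module.End k V) = (χ h : k) • (r₂ (h : Γ) : Module.End k V))
    (hirr : ∀ Δ' : Subgroup Γ, Δ'.FiniteIndex →
      ∀ W : Submodule k V,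
        (∀ g ∈ Δ', ∀ v ∈ W, (r₁ g : Module.End k V) v ∈ W) → W = ⊥ ∨ W = ⊤) :
    ∃ χ' : Γ →* kˣ, (∀ h : Δ, χ' (h : Γ) = χ h) ∧
      ∀ g : Γ, (r₁ g : Module.End k V) = (χ' g : k) • (r₂ g : Module.End k V) :=
  twist_extends_general Δ r₁ r₂ χ hχ hirr
end

section
/- Let k be an algebraically closed field, G a group, V a nonzero finite-dimensional k-vector space, ρ : G →* GL(V) a group homomorphism, and η : G →* kˣ a character. Suppose there exists A ∈ GL(V) such that A ∘ ρ(g) ∘ A⁻¹ = η(g) • ρ(g) for all g ∈ G. If the restriction of ρ to the kernel of η is irreducible, then η is the trivial character, i.e. η(g) = 1 for all g ∈ G. -/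
/-!
By Schur's lemma, `A` is a scalar: it commutes with `ρ(ker η)`, because the conjugation relation
at `τ ∈ ker η` reads `A ρ(τ) A⁻¹ = ρ(τ)`, and `ρ` restricted to `ker η` is irreducible. Conjugation
by a scalar is trivial, so `ρ(g) = η(g) • ρ(g)` for every `g`, which forces `η(g) = 1` since
`ρ(g)` is invertible, hence nonzero.
-/

open Module

namespace Module.End

variable {k V : Type*} [Field k] [IsAlgClosed k] [AddCommGroup V] [Module k V]
  [FiniteDimensional k V] [Nontrivial V]

theorem exists_eq_algebraMap_of_forall_commute_s2 {ι : Type*} (T : ι → End k V)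
    (hirr : ∀ W : Submodule k V, (∀ i, ∀ v ∈ W, T i v ∈ W) → W = ⊥ ∨ W = ⊤)
    (f : End k V) (hf : ∀ i, Commute f (T i)) : ∃ c : k, f = algebraMap k (End k V) c := by
  obtain ⟨c, hc⟩ := f.exists_eigenvalue
  have hinv : ∀ i, ∀ v ∈ f.eigenspace c, T i v ∈ f.eigenspace c := fun i v hv => by
    rw [mem_eigenspace_iff] at hv ⊢
    rw [← mul_apply, (hf i).eq, mul_apply, hv, map_smul]
  have htop : f.eigenspace c = ⊤ := (hirr _ hinv).resolve_left hc
  exact ⟨c, LinearMap.ext fun v => mem_eigenspace_iff.mp (htop ▸ Submodule.mem_top)⟩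

end Module.End

/-- Second case of the proof of Lemma 5.3 (contrapositive form): if `ρ` is conjugate to
its twist `ρ ⊗ η` and the restriction of `ρ` to `ker η` is irreducible, then `η` is
trivial. -/
theorem twist_conjugate_irreducible_ker_char_trivial
    {k : Type*} [Field k] [IsAlgClosed k]
    {V : Type*} [AddCommGroup V] [Module k V] [FiniteDimensional k V] [Nontrivial V]
    {G : Type*} [Group G]
    (ρ : G →* (Module.End k V)ˣ) (η : G →* kˣ)
    (A : (Module.End k V)ˣ)
    (hA : ∀ g : G,
      (A : Module.End k V) ∘ₗ (ρ g : Module.End k V) ∘ₗ ((A⁻¹ : (Module.End k V)ˣ) : Module.End k V)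
        = (η g : k) • (ρ g : Module.End k V))
    (hirr : ∀ W : Submodule k V,
      (∀ g ∈ η.ker, ∀ v ∈ W, (ρ g : Module.End k V) v ∈ W) → W = ⊥ ∨ W = ⊤) :
    ∀ g : G, η g = 1 := by
  have hconj : ∀ g, (A : End k V) * ρ g * ↑A⁻¹ = (η g : k) • (ρ g : End k V) := hA
  have hcomm : ∀ τ : η.ker, Commute (A : End k V) (ρ τ) := fun ⟨τ, hτ⟩ => by
    have h := hconj τ
    rwa [MonoidHom.mem_ker.mp hτ, Units.val_one, one_smul, Units.mul_inv_eq_iff_eq_mul] at h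
  obtain ⟨c, hc⟩ := End.exists_eq_algebraMap_of_forall_commute_s2 (fun τ : η.ker => (ρ τ : End k V))
    (fun W hW => hirr W fun g hg => hW ⟨g, hg⟩) A hcomm
  intro g
  have hfix : (η g : k) • (ρ g : End k V) = (1 : k) • ρ g := by
    rw [← hconj, hc, Algebra.commutes, mul_assoc, ← hc, Units.mul_inv, mul_one, one_smul]
  exact Units.ext (smul_left_injective k (ρ g).ne_zero hfix)
end

section
/- Let k be an algebraically closed field, Γ a group, Δ a normal subgroup of Γ, V a nonzero finite-dimensional k-vector space, and r₁, r₂ : Γ →* GL(V) group homomorphisms with r₁(h) = r₂(h) for all h ∈ Δ. Suppose the restriction of r₂ to Δ is irreducible. Then there exists a character χ' : Γ →* kˣ with χ'(h) = 1 for all h ∈ Δ and r₁(g) = χ'(g) • r₂(g) for all g ∈ Γ. -/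
/-!
For each `g`, the unit `r₂ g⁻¹ * r₁ g` commutes with `r₂ h` for every `h ∈ Δ`, because `Δ` is
normal and `r₁`, `r₂` agree on `g h g⁻¹`. By Schur's lemma it is a scalar `χ g`. Since `r₂ g` is
invertible this scalar is unique, which makes `χ` multiplicative and trivial on `Δ`.
-/

open Module End

theorem Commute.inv_mul_of_eqOn_normal {Γ H : Type*} [Group Γ] [Group H] {Δ : Subgroup Γ}
    [Δ.Normal] {r₁ r₂ : Γ →* H} (hagree : ∀ h ∈ Δ, r₁ h = r₂ h) (g : Γ) {h : Γ} (hh : h ∈ Δ) :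
    Commute ((r₂ g)⁻¹ * r₁ g) (r₂ h) := by
  have hconj : r₁ g * r₂ h * (r₁ g)⁻¹ = r₂ g * r₂ h * (r₂ g)⁻¹ := by
    simpa [hagree h hh] using hagree _ (‹Δ.Normal›.conj_mem h hh g)
  calc (r₂ g)⁻¹ * r₁ g * r₂ h = (r₂ g)⁻¹ * (r₁ g * r₂ h * (r₁ g)⁻¹) * r₁ g := by group
    _ = r₂ h * ((r₂ g)⁻¹ * r₁ g) := by rw [hconj]; group

theorem Module.End.exists_eq_algebraMap_of_commute {k V ι : Type*} [Field k] [IsAlgClosed k]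
    [AddCommGroup V] [Module k V] [FiniteDimensional k V] [Nontrivial V] {ρ : ι → End k V}
    (hirr : ∀ W : Submodule k V, (∀ i, ∀ v ∈ W, ρ i v ∈ W) → W = ⊥ ∨ W = ⊤)
    {T : End k V} (hT : ∀ i, Commute T (ρ i)) : ∃ c : k, T = algebraMap k (End k V) c := by
  obtain ⟨c, hc⟩ := T.exists_eigenvalue
  have htop : T.eigenspace c = ⊤ :=
    (hirr _ fun i => mapsTo_genEigenspace_of_comm (hT i) c 1).resolve_left hc
  refine ⟨c, LinearMap.ext fun v => ?_⟩
  simpa [mem_eigenspace_iff] using htop.ge (Submodule.mem_top (x := v))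

theorem Units.smul_left_injective {k A : Type*} [Field k] [Ring A] [Module k A] [Nontrivial A]
    (u : Aˣ) : Function.Injective fun c : k => c • (u : A) :=
  _root_.smul_left_injective k u.ne_zero

theorem MonoidHom.exists_units_smul_of_forall_exists_smul {k A G : Type*} [Field k] [Ring A]
    [Algebra k A] [Nontrivial A] [Monoid G] (r₁ r₂ : G →* Aˣ)
    (h : ∀ g, ∃ c : k, (r₁ g : A) = c • (r₂ g : A)) :
    ∃ χ : G →* kˣ, ∀ g, (r₁ g : A) = (χ g : k) • (r₂ g : A) := by
  choose c hc using h
  have hne : ∀ g, c g ≠ 0 := fun g h0 => (r₁ g).ne_zero (by rw [hc g, h0, zero_smul])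
  refine ⟨{ toFun := fun g => Units.mk0 (c g) (hne g), map_one' := ?_, map_mul' := ?_ }, hc⟩
  · ext
    refine (r₂ 1).smul_left_injective ?_
    simpa using (hc 1).symm
  · intro g g'
    ext
    refine (r₂ (g * g')).smul_left_injective ?_
    calc c (g * g') • (r₂ (g * g') : A) = r₁ (g * g') := (hc _).symm
      _ = (c g * c g') • r₂ (g * g') := by
        simp only [map_mul, Units.val_mul, hc g, hc g', smul_mul_smul_comm]

/-- First case of the proof of Lemma 5.3: if `r₁` and `r₂` agree on a normal subgroup `Δ`
and `r₂` restricted to `Δ` is irreducible, then `r₁` is a character twist of `r₂` by a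
character trivial on `Δ` (Schur's lemma applied to `g_σ = r₂(σ)⁻¹ r₁(σ)`). -/
theorem eq_on_normal_subgroup_twist
    {k : Type*} [Field k] [IsAlgClosed k]
    {V : Type*} [AddCommGroup V] [Module k V] [FiniteDimensional k V] [Nontrivial V]
    {Γ : Type*} [Group Γ] (Δ : Subgroup Γ) [Δ.Normal]
    (r₁ r₂ : Γ →* (Module.End k V)ˣ)
    (hagree : ∀ h ∈ Δ, r₁ h = r₂ h)
    (hirr : ∀ W : Submodule k V,
      (∀ h ∈ Δ, ∀ v ∈ W, (r₂ h : Module.End k V) v ∈ W) → W = ⊥ ∨ W = ⊤) :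
    ∃ χ' : Γ →* kˣ, (∀ h ∈ Δ, χ' h = 1) ∧
      ∀ g : Γ, (r₁ g : Module.End k V) = (χ' g : k) • (r₂ g : Module.End k V) := by
  have hscalar (g : Γ) : ∃ c : k, (r₁ g : End k V) = c • (r₂ g : End k V) := by
    obtain ⟨c, hc⟩ := exists_eq_algebraMap_of_commute (ρ := fun h : Δ => (r₂ h : End k V))
      (fun W hW => hirr W fun h hh => hW ⟨h, hh⟩) (T := ((r₂ g)⁻¹ * r₁ g : (End k V)ˣ))
      fun h => (Commute.inv_mul_of_eqOn_normal hagree g h.2).units_val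
    refine ⟨c, ?_⟩
    calc (r₁ g : End k V) = r₂ g * ((r₂ g)⁻¹ * r₁ g : (End k V)ˣ) := by simp
      _ = c • (r₂ g : End k V) := by rw [hc, ← Algebra.commutes, ← Algebra.smul_def]
  obtain ⟨χ, hχ⟩ := MonoidHom.exists_units_smul_of_forall_exists_smul r₁ r₂ hscalar
  refine ⟨χ, fun h hh => Units.ext ((r₂ h).smul_left_injective ?_), hχ⟩
  simp only [← hχ, hagree h hh, Units.val_one, one_smul]
end

section
/- Let k be a field of characteristic zero and V a finite-dimensional k-vector space with an internal direct sum decomposition V = T ⊕ P ⊕ N into subspaces T, P, N. Let θ : V →ₗ[k] V be a linear involution (θ ∘ θ = id) with θ(T) ⊆ T, θ(P) ⊆ N, θ(N) ⊆ P, and with trace of θ equal to −(dim_k T). Then: (i) θ restricted to T equals −id; and (ii) for every subspace W of V with θ(W) ⊆ W which is the internal direct sum W = (W ∩ T) ⊕ (W ∩ P) ⊕ (W ∩ N), the trace of the restriction of θ to W equals −dim_k(W ∩ T). -/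
/-!
Because `θ` swaps `P` and `N`, those blocks contribute nothing to its trace, so
`tr θ = tr (θ|_T)`. On `T` the involution `θ` then has trace `-dim T`, so the idempotent
`(1 + θ) / 2` of `T` has trace zero and hence vanishes: `θ = -1` on `T`. A `θ`-stable `W`
compatible with the decomposition inherits the same block structure, with `θ = -1` on `W ∩ T`,
and the same trace computation gives `tr (θ|_W) = -dim (W ∩ T)`.
-/

open LinearMap Set DirectSum Submodule Module

section Decomposition

variable {ι R M : Type*} [Ring R] [AddCommGroup M] [Module R M]

theorem iSupIndep_comap_subtype {N : ι → Submodule R M} (h : iSupIndep N) (W : Submodule R M) :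
    iSupIndep fun i ↦ (N i).comap W.subtype := by
  rw [← iSupIndep_map_orderIso_iff W.mapIic]
  refine iSupIndep.of_coe_Iic_comp ?_
  simpa [Function.comp_def, map_comap_subtype] using h.mono fun i ↦ inf_le_right (a := W)

theorem DirectSum.IsInternal.comap_subtype [DecidableEq ι] {N : ι → Submodule R M}
    (h : IsInternal N) {W : Submodule R M} (hW : ⨆ i, W ⊓ N i = W) :
    IsInternal fun i ↦ (N i).comap W.subtype := by
  refine isInternal_submodule_of_iSupIndep_of_iSup_eq_top
    (iSupIndep_comap_subtype h.submodule_iSupIndep W) ?_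
  apply map_injective_of_injective W.injective_subtype
  simp [Submodule.map_iSup, map_comap_subtype, hW]

theorem DirectSum.IsInternal.isCompl_fin_three {N : Fin 3 → Submodule R M} (h : IsInternal N) :
    IsCompl (N 0) (N 1 ⊔ N 2) :=
  ⟨(iSupIndep_fin_three.mp h.submodule_iSupIndep).1,
    codisjoint_iff.mpr <| by rw [← sup_assoc, ← iSup_fin_three, h.submodule_iSup_eq_top]⟩

end Decomposition

section Trace

variable {K V : Type*} [Field K] [AddCommGroup V] [Module K V] [FiniteDimensional K V]

theorem LinearMap.trace_eq_trace_restrict_of_mapsTo_swap {N : Fin 3 → Submodule K V}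
    (h : IsInternal N) {f : Module.End K V} (h₀ : MapsTo f (N 0) (N 0))
    (h₁ : MapsTo f (N 1) (N 2)) (h₂ : MapsTo f (N 2) (N 1)) :
    trace K V f = trace K (N 0) (f.restrict h₀) := by
  have hc := h.isCompl_fin_three
  have hp : trace K V (f ∘ₗ (N 0).projection _ hc) = trace K (N 0) (f.restrict h₀) := by
    rw [projection, ← comp_assoc, trace_comp_comm']
    congr 1
    ext v
    exact congrArg Subtype.val (projectionOnto_apply_of_mem_left hc (h₀ v.2))
  -- this map kills `N 0` and swaps `N 1` and `N 2`, so it moves every block off the diagonal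
  have hq : trace K V (f ∘ₗ (N 1 ⊔ N 2).projection _ hc.symm) = 0 := by
    refine trace_eq_zero_of_mapsTo_ne h ![1, 2, 1] (by decide) fun i ↦ ?_
    fin_cases i <;> intro v hv
    · simp [projection_apply_of_mem_right hc.symm hv]
    · simpa [projection_apply_of_mem_left hc.symm (mem_sup_left hv)] using h₁ hv
    · simpa [projection_apply_of_mem_left hc.symm (mem_sup_right hv)] using h₂ hv
  calc trace K V f
      = trace K V (f ∘ₗ ((N 0).projection _ hc + (N 1 ⊔ N 2).projection _ hc.symm)) := by
        rw [projection_add_projection_eq_id, comp_id]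
    _ = trace K V (f ∘ₗ (N 0).projection _ hc) := by rw [comp_add, map_add, hq, add_zero]
    _ = trace K (N 0) (f.restrict h₀) := hp

theorem Module.End.eq_neg_one_of_mul_self_eq_one_of_trace_eq_neg_finrank [CharZero K]
    {f : Module.End K V} (hf : f * f = 1) (htr : trace K V f = -finrank K V) : f = -1 := by
  have hidem : IsIdempotentElem ((2 : K)⁻¹ • (1 + f)) := by
    have hsq : (1 + f) * (1 + f) = (2 : K) • (1 + f) := by
      simp only [add_mul, mul_add, hf, one_mul, mul_one, two_smul]
      abel
    rw [IsIdempotentElem, smul_mul_smul_comm, hsq, smul_smul]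
    norm_num
  have htr0 : trace K V ((2 : K)⁻¹ • (1 + f)) = 0 := by simp [htr, trace_one]
  have := hidem.eq_zero_of_trace_eq_zero htr0
  rw [smul_eq_zero, inv_eq_zero] at this
  exact eq_neg_of_add_eq_zero_right (this.resolve_left two_ne_zero)

theorem LinearMap.trace_eq_neg_finrank_of_mapsTo_swap {N : Fin 3 → Submodule K V}
    (h : IsInternal N) {f : Module.End K V} (h₀ : ∀ v ∈ N 0, f v = -v)
    (h₁ : MapsTo f (N 1) (N 2)) (h₂ : MapsTo f (N 2) (N 1)) :
    trace K V f = -finrank K (N 0) := by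
  have h₀' : MapsTo f (N 0) (N 0) := fun v hv ↦ by simpa [h₀ v hv] using hv
  have hres : f.restrict h₀' = -1 := by
    ext v
    exact h₀ v v.2
  rw [trace_eq_trace_restrict_of_mapsTo_swap h h₀' h₁ h₂, hres, map_neg, trace_one]

end Trace

/-- Linear-algebra core of Lemma 2.2 (oddness passes to reductive subgroups):
if `V = T ⊕ P ⊕ N`, `θ` is an involution preserving `T` and swapping `P` and `N`,
and `tr θ = -dim T`, then `θ = -1` on `T`, and for any `θ`-invariant subspace `W`
compatible with the decomposition, `tr (θ|_W) = -dim (W ∩ T)`. -/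
theorem odd_involution_restricts
    {k : Type*} [Field k] [CharZero k]
    {V : Type*} [AddCommGroup V] [Module k V] [FiniteDimensional k V]
    (T P N : Submodule k V) (hint : DirectSum.IsInternal ![T, P, N])
    (θ : V →ₗ[k] V) (hinv : θ ∘ₗ θ = LinearMap.id)
    (hT : ∀ v ∈ T, θ v ∈ T) (hP : ∀ v ∈ P, θ v ∈ N) (hN : ∀ v ∈ N, θ v ∈ P)
    (htr : LinearMap.trace k V θ = -(Module.finrank k T : k)) :
    (∀ v ∈ T, θ v = -v) ∧
      ∀ (W : Submodule k V) (hW : ∀ v ∈ W, θ v ∈ W),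
        (W ⊓ T) ⊔ (W ⊓ P) ⊔ (W ⊓ N) = W →
        LinearMap.trace k W (θ.restrict hW) = -(Module.finrank k ↥(W ⊓ T) : k) := by
  have hθT : ∀ v ∈ T, θ v = -v := by
    have hres : θ.restrict hT = -1 := by
      refine Module.End.eq_neg_one_of_mul_self_eq_one_of_trace_eq_neg_finrank ?_ ?_
      · ext v
        simpa [coe_restrict_apply] using congr($hinv v)
      · exact (trace_eq_trace_restrict_of_mapsTo_swap hint hT hP hN).symm.trans htr
    intro v hv
    simpa [coe_restrict_apply] using congr(($hres ⟨v, hv⟩ : V))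
  refine ⟨hθT, fun W hW hWsup ↦ ?_⟩
  have hintW := hint.comap_subtype (W := W) (by simpa using hWsup)
  rw [trace_eq_neg_finrank_of_mapsTo_swap hintW (fun v hv ↦ Subtype.ext (hθT v hv))
    (fun v hv ↦ hP v hv) (fun v hv ↦ hN v hv), ← finrank_map_subtype_eq, map_comap_subtype]
  rfl
end
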